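/- arXiv:2602.23484 — 2 statements merged into one kernel-verified Lean document; each statement's English description precedes it below -/
import Mathlib

section
/- Let E_i[ρ] = (ρ + X_{2i} ρ X_{2i})/2 be the full even-site dephasing channel and ρ_c = E[|ψ⟩⟨ψ|] the decohered cluster state (h = 0). Then the Rényi-2 correlator Tr(ρ_c Z_{2r-1}Z_{2r'+1} ρ_c Z_{2r-1}Z_{2r'+1}) / Tr(ρ_c²) = 1 for all r < r'. -/
open Matrix
open Fin.NatCast

/-- The operator `∏_{i ∈ A} X_i` flipping the spins in the set `A`
(in the `Z` basis of `(ℂ²)^{⊗L}`, realized as functions `Fin L → Fin 2`). -/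
def flipSet (L : ℕ) (A : Finset (Fin L)) :
    Matrix (Fin L → Fin 2) (Fin L → Fin 2) ℂ :=
  fun f g => if g = (fun j => if j ∈ A then 1 - f j else f j) then 1 else 0

/-- Pauli `X` on site `i`. -/
def pauliX (L : ℕ) (i : Fin L) : Matrix (Fin L → Fin 2) (Fin L → Fin 2) ℂ :=
  flipSet L {i}

/-- Pauli `Z` on site `i`. -/
def pauliZ (L : ℕ) (i : Fin L) : Matrix (Fin L → Fin 2) (Fin L → Fin 2) ℂ :=
  Matrix.diagonal (fun f => if f i = 0 then 1 else -1)

/-- The ZXZ cluster stabilizer `S_i = Z_{i-1} X_i Z_{i+1}` (periodic boundary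
conditions). -/
noncomputable def stab (L : ℕ) [NeZero L] (i : Fin L) :
    Matrix (Fin L → Fin 2) (Fin L → Fin 2) ℂ :=
  pauliZ L (i - 1) * pauliX L i * pauliZ L (i + 1)

/-- The set of even sites of the chain. -/
def evens (L : ℕ) : Finset (Fin L) := Finset.univ.filter fun j => j.val % 2 = 0

/-- The decohered cluster state `ρ_c = E[|ψ⟩⟨ψ|]`, where
`E = ∏_i E_{2i}` with `E_i[ρ] = (ρ + X_{2i} ρ X_{2i})/2` dephases all even
sites in the `X` basis; expanded, `ρ_c = 2^{-|evens|} Σ_{A ⊆ evens} X_A ρ X_A`. -/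
noncomputable def rhoc (L : ℕ) (ψ : (Fin L → Fin 2) → ℂ) :
    Matrix (Fin L → Fin 2) (Fin L → Fin 2) ℂ :=
  ((1 : ℂ) / 2 ^ (evens L).card) •
    ∑ A ∈ (evens L).powerset, flipSet L A * vecMulVec ψ (star ψ) * flipSet L A

/-! The string of stabilizers `S_{2r} S_{2r+2} ⋯ S_{2r'}` telescopes to
`Z_{2r-1} X_{2r} X_{2r+2} ⋯ X_{2r'} Z_{2r'+1}`, the inner `Z`'s cancelling in pairs. Hence
`O = Z_{2r-1} Z_{2r'+1}` acts on `ψ` as the flip `X_B` of the even block `B = {2r, …, 2r'}`.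
As `O` lives on odd sites it commutes with every even flip `X_A`, so conjugating
`ρ_c = 2^{-n} Σ_A X_A |ψ⟩⟨ψ| X_A` by `O` just relabels `A ↦ A ∆ B`: `O ρ_c O = ρ_c`. The numerator
is then `Tr(ρ_c (O ρ_c O)) = Tr(ρ_c²)`, which is nonzero because `ρ_c` is Hermitian with
`Tr ρ_c = ‖ψ‖² ≠ 0`. -/

open scoped symmDiff

variable {L : ℕ}

def flipConfig (A : Finset (Fin L)) (f : Fin L → Fin 2) : Fin L → Fin 2 :=
  fun j => if j ∈ A then 1 - f j else f j

lemma flipConfig_of_notMem {A : Finset (Fin L)} {j : Fin L} (hj : j ∉ A) (f : Fin L → Fin 2) :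
    flipConfig A f j = f j :=
  if_neg hj

@[simp]
lemma flipConfig_empty (f : Fin L → Fin 2) : flipConfig ∅ f = f :=
  rfl

lemma flipConfig_flipConfig (A B : Finset (Fin L)) (f : Fin L → Fin 2) :
    flipConfig A (flipConfig B f) = flipConfig (A ∆ B) f := by
  funext j
  by_cases hA : j ∈ A <;> by_cases hB : j ∈ B <;>
    simp [flipConfig, Finset.mem_symmDiff, hA, hB]

lemma eq_flipConfig_comm {A : Finset (Fin L)} {f g : Fin L → Fin 2} :
    g = flipConfig A f ↔ f = flipConfig A g := by
  have h (f : Fin L → Fin 2) : flipConfig A (flipConfig A f) = f := by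
    rw [flipConfig_flipConfig, symmDiff_self, Finset.bot_eq_empty, flipConfig_empty]
  constructor <;> rintro rfl <;> rw [h]

lemma flipSet_apply (A : Finset (Fin L)) (f g : Fin L → Fin 2) :
    flipSet L A f g = if g = flipConfig A f then 1 else 0 :=
  rfl

lemma flipSet_mul_flipSet (A B : Finset (Fin L)) :
    flipSet L A * flipSet L B = flipSet L (A ∆ B) := by
  ext f g
  simp only [mul_apply, flipSet_apply, ite_mul, one_mul, zero_mul, Finset.sum_ite_eq',
    Finset.mem_univ, if_true, flipConfig_flipConfig, symmDiff_comm B A]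

lemma flipSet_empty : flipSet L ∅ = 1 := by
  ext f g
  simp [flipSet_apply, one_apply, eq_comm]

lemma conjTranspose_flipSet (A : Finset (Fin L)) : (flipSet L A)ᴴ = flipSet L A := by
  ext f g
  simp [flipSet_apply, eq_flipConfig_comm (f := f)]

lemma flipSet_insert {a : Fin L} {A : Finset (Fin L)} (ha : a ∉ A) :
    flipSet L (insert a A) = flipSet L A * pauliX L a := by
  rw [pauliX, flipSet_mul_flipSet, (Finset.disjoint_singleton_right.2 ha).symmDiff_eq_sup,
    Finset.sup_eq_union, Finset.union_comm, ← Finset.insert_eq]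

lemma pauliZ_mul_self (i : Fin L) : pauliZ L i * pauliZ L i = 1 := by
  rw [pauliZ, diagonal_mul_diagonal, ← diagonal_one]
  congr 1
  funext f
  split_ifs <;> norm_num

lemma isHermitian_pauliZ (i : Fin L) : (pauliZ L i).IsHermitian := by
  rw [IsHermitian, pauliZ, diagonal_conjTranspose]
  congr 1
  funext f
  by_cases h : f i = 0 <;> simp [h]

lemma commute_pauliZ_pauliZ (i j : Fin L) : Commute (pauliZ L i) (pauliZ L j) :=
  commute_diagonal _ _

lemma commute_pauliZ_flipSet {i : Fin L} {A : Finset (Fin L)} (hi : i ∉ A) :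
    Commute (pauliZ L i) (flipSet L A) := by
  ext f g
  simp only [pauliZ, diagonal_mul, mul_diagonal, flipSet_apply]
  by_cases h : g = flipConfig A f
  · subst h
    simp [flipConfig_of_notMem hi]
  · simp [h]

lemma Fin.add_one_ne_self [NeZero L] (hL : 1 < L) (i : Fin L) : i + 1 ≠ i := fun h => by
  have h1 : ((1 : Fin L) : ℕ) = 0 := by rw [add_eq_left.1 h, Fin.val_zero]
  rw [Fin.val_one', Nat.mod_eq_of_lt hL] at h1
  exact one_ne_zero h1

lemma pauliX_mulVec_of_stab_mulVec [NeZero L] (hL : 1 < L) {i : Fin L}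
    {ψ : (Fin L → Fin 2) → ℂ} (h : stab L i *ᵥ ψ = ψ) :
    pauliX L i *ᵥ ψ = (pauliZ L (i - 1) * pauliZ L (i + 1)) *ᵥ ψ := by
  have hX : pauliX L i = pauliZ L (i + 1) * pauliZ L (i - 1) * stab L i := by
    have hc : Commute (pauliZ L (i + 1)) (pauliX L i) :=
      commute_pauliZ_flipSet (Finset.notMem_singleton.2 (Fin.add_one_ne_self hL i))
    calc pauliX L i = pauliX L i * (pauliZ L (i + 1) * pauliZ L (i + 1)) := by
          rw [pauliZ_mul_self, mul_one]
      _ = pauliZ L (i + 1) * pauliX L i * pauliZ L (i + 1) := by rw [← mul_assoc, ← hc.eq]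
      _ = pauliZ L (i + 1) * (pauliZ L (i - 1) * pauliZ L (i - 1)) * pauliX L i *
            pauliZ L (i + 1) := by rw [pauliZ_mul_self, mul_one]
      _ = _ := by simp only [stab, mul_assoc]
  rw [hX, ← mulVec_mulVec, h, (commute_pauliZ_pauliZ _ _).eq]

def evenBlock (L r m : ℕ) : Finset (Fin L) :=
  (evens L).filter fun j => 2 * r ≤ j.val ∧ j.val ≤ 2 * m

lemma evenBlock_subset_evens (r m : ℕ) : evenBlock L r m ⊆ evens L :=
  Finset.filter_subset _ _

lemma notMem_of_subset_evens {A : Finset (Fin L)} (hA : A ⊆ evens L) {i : Fin L}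
    (hi : i.val % 2 = 1) : i ∉ A := fun h => by
  have := hA h
  simp only [evens, Finset.mem_filter] at this
  omega

lemma evenBlock_self [NeZero L] {r : ℕ} (h : 2 * r < L) :
    evenBlock L r r = {((2 * r : ℕ) : Fin L)} := by
  ext j
  simp only [evenBlock, evens, Finset.mem_filter, Finset.mem_univ, true_and,
    Finset.mem_singleton, Fin.ext_iff, Fin.val_cast_of_lt h]
  omega

lemma evenBlock_succ [NeZero L] {r m : ℕ} (hrm : r ≤ m) (h : 2 * m + 2 < L) :
    evenBlock L r (m + 1) = insert ((2 * m + 2 : ℕ) : Fin L) (evenBlock L r m) := by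
  ext j
  simp only [evenBlock, evens, Finset.mem_filter, Finset.mem_univ, true_and,
    Finset.mem_insert, Fin.ext_iff, Fin.val_cast_of_lt h]
  omega

lemma flipSet_evenBlock_mulVec [NeZero L] {ψ : (Fin L → Fin 2) → ℂ}
    (hstab : ∀ i, stab L i *ᵥ ψ = ψ) {r m : ℕ} (hrm : r ≤ m) (hm : 2 * m + 1 < L) :
    flipSet L (evenBlock L r m) *ᵥ ψ =
      (pauliZ L ((2 * r : ℕ) - 1) * pauliZ L ((2 * m + 1 : ℕ))) *ᵥ ψ := by
  induction m, hrm using Nat.le_induction with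
  | base =>
    rw [evenBlock_self (by omega), ← pauliX, pauliX_mulVec_of_stab_mulVec (by omega) (hstab _),
      Nat.cast_succ]
  | succ m hrm ih =>
    have hodd : ∀ k, 2 * k + 1 < L → ((2 * k + 1 : ℕ) : Fin L) ∉ evenBlock L r m :=
      fun k hk => notMem_of_subset_evens (evenBlock_subset_evens r m)
        (by rw [Fin.val_cast_of_lt hk]; omega)
    have hstab' := pauliX_mulVec_of_stab_mulVec (by omega) (hstab ((2 * m + 2 : ℕ) : Fin L))
    have hsub : ((2 * m + 2 : ℕ) : Fin L) - 1 = ((2 * m + 1 : ℕ) : Fin L) := by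
      rw [Nat.cast_succ, add_sub_cancel_right]
    have hadd : ((2 * m + 2 : ℕ) : Fin L) + 1 = ((2 * (m + 1) + 1 : ℕ) : Fin L) :=
      (Nat.cast_succ _).symm
    rw [hsub, hadd] at hstab'
    have hnew : ((2 * m + 2 : ℕ) : Fin L) ∉ evenBlock L r m := by
      simp only [evenBlock, Finset.mem_filter, Fin.val_cast_of_lt (show 2 * m + 2 < L by omega)]
      omega
    have hcomm : Commute (pauliZ L ((2 * m + 1 : ℕ)) * pauliZ L ((2 * (m + 1) + 1 : ℕ)))
        (flipSet L (evenBlock L r m)) :=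
      (commute_pauliZ_flipSet (hodd m (by omega))).mul_left
        (commute_pauliZ_flipSet (hodd (m + 1) (by omega)))
    calc flipSet L (evenBlock L r (m + 1)) *ᵥ ψ
        = flipSet L (evenBlock L r m) *ᵥ (pauliX L ((2 * m + 2 : ℕ)) *ᵥ ψ) := by
          rw [evenBlock_succ hrm (by omega), flipSet_insert hnew, mulVec_mulVec]
      _ = (pauliZ L ((2 * m + 1 : ℕ)) * pauliZ L ((2 * (m + 1) + 1 : ℕ))) *ᵥ
            (flipSet L (evenBlock L r m) *ᵥ ψ) := by
          rw [hstab', mulVec_mulVec, mulVec_mulVec, hcomm.eq]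
      _ = (pauliZ L ((2 * m + 1 : ℕ)) * pauliZ L ((2 * (m + 1) + 1 : ℕ))) *ᵥ
            ((pauliZ L ((2 * r : ℕ) - 1) * pauliZ L ((2 * m + 1 : ℕ))) *ᵥ ψ) := by
          rw [ih (by omega)]
      _ = (pauliZ L ((2 * r : ℕ) - 1) * pauliZ L ((2 * (m + 1) + 1 : ℕ))) *ᵥ ψ := by
          rw [mulVec_mulVec]
          congr 1
          simp only [pauliZ, diagonal_mul_diagonal]
          congr 1
          funext f
          split_ifs <;> ring

lemma Finset.sum_powerset_symmDiff {α M : Type*} [DecidableEq α] [AddCommMonoid M]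
    {S B : Finset α} (hB : B ⊆ S) (F : Finset α → M) :
    ∑ A ∈ S.powerset, F (A ∆ B) = ∑ A ∈ S.powerset, F A := by
  have hmaps : ∀ A ∈ S.powerset, A ∆ B ∈ S.powerset := fun A hA =>
    Finset.mem_powerset.2 (symmDiff_le_sup.trans (sup_le (Finset.mem_powerset.1 hA) hB))
  have hinv : ∀ A ∈ S.powerset, A ∆ B ∆ B = A := fun A _ => symmDiff_symmDiff_cancel_right B A
  exact Finset.sum_nbij' (· ∆ B) (· ∆ B) hmaps hmaps hinv hinv fun _ _ => rfl

lemma Matrix.mul_vecMulVec_star_mul_conjTranspose {m n α : Type*} [Fintype n] [Semiring α]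
    [StarRing α] (M : Matrix m n α) (v : n → α) :
    M * vecMulVec v (star v) * Mᴴ = vecMulVec (M *ᵥ v) (star (M *ᵥ v)) := by
  rw [mul_vecMulVec, vecMulVec_mul, star_mulVec]

lemma mul_rhoc_mul_eq_self {ψ : (Fin L → Fin 2) → ℂ} {O : Matrix (Fin L → Fin 2) (Fin L → Fin 2) ℂ}
    {B : Finset (Fin L)} (hB : B ⊆ evens L) (hO : O.IsHermitian)
    (hcomm : ∀ A ⊆ evens L, Commute O (flipSet L A)) (hψ : O *ᵥ ψ = flipSet L B *ᵥ ψ) :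
    O * rhoc L ψ * O = rhoc L ψ := by
  set P := vecMulVec ψ (star ψ)
  have hOPO : O * P * O = flipSet L B * P * flipSet L B := by
    calc O * P * O = vecMulVec (O *ᵥ ψ) (star (O *ᵥ ψ)) := by
          rw [← mul_vecMulVec_star_mul_conjTranspose, hO.eq]
      _ = flipSet L B * P * flipSet L B := by
          rw [hψ, ← mul_vecMulVec_star_mul_conjTranspose, conjTranspose_flipSet]
  have hterm : ∀ A ⊆ evens L,
      O * (flipSet L A * P * flipSet L A) * O = flipSet L (A ∆ B) * P * flipSet L (A ∆ B) := by
    intro A hA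
    calc O * (flipSet L A * P * flipSet L A) * O = flipSet L A * (O * P * O) * flipSet L A := by
          simp only [← mul_assoc, (hcomm A hA).eq]
          simp only [mul_assoc, (hcomm A hA).eq]
      _ = flipSet L (A ∆ B) * P * flipSet L (A ∆ B) := by
          rw [hOPO]
          nth_rewrite 1 [← flipSet_mul_flipSet]
          rw [symmDiff_comm, ← flipSet_mul_flipSet]
          simp only [mul_assoc]
  rw [rhoc, Matrix.mul_smul, Matrix.smul_mul, Finset.mul_sum, Finset.sum_mul,
    Finset.sum_congr rfl fun A hA => hterm A (Finset.mem_powerset.1 hA),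
    Finset.sum_powerset_symmDiff hB (fun A => flipSet L A * P * flipSet L A)]

lemma trace_rhoc (ψ : (Fin L → Fin 2) → ℂ) : (rhoc L ψ).trace = ψ ⬝ᵥ star ψ := by
  have hterm (A : Finset (Fin L)) :
      (flipSet L A * vecMulVec ψ (star ψ) * flipSet L A).trace = ψ ⬝ᵥ star ψ := by
    rw [trace_mul_cycle, flipSet_mul_flipSet, symmDiff_self, Finset.bot_eq_empty, flipSet_empty,
      one_mul, trace_vecMulVec]
  simp only [rhoc, trace_smul, trace_sum, hterm, Finset.sum_const, Finset.card_powerset,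
    nsmul_eq_mul, smul_eq_mul]
  push_cast
  field_simp

lemma isHermitian_rhoc (ψ : (Fin L → Fin 2) → ℂ) : (rhoc L ψ).IsHermitian := by
  simp [IsHermitian, rhoc, conjTranspose_sum, conjTranspose_flipSet, mul_assoc]

open scoped ComplexOrder in
lemma trace_rhoc_mul_rhoc_ne_zero {ψ : (Fin L → Fin 2) → ℂ} (hψ : ψ ≠ 0) :
    (rhoc L ψ * rhoc L ψ).trace ≠ 0 := by
  have hρ : rhoc L ψ ≠ 0 := fun h => by
    have := trace_rhoc ψ
    rw [h, trace_zero] at this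
    exact hψ (dotProduct_self_star_eq_zero.1 this.symm)
  nth_rewrite 1 [← (isHermitian_rhoc ψ).eq]
  exact trace_conjTranspose_mul_self_eq_zero_iff.not.2 hρ

theorem stmt9_general (L r r' : ℕ) [NeZero L]
    (hr : 0 < r) (hrr' : r < r') (hbound : 2 * r' + 1 < L)
    (ψ : (Fin L → Fin 2) → ℂ) (hψ : ψ ≠ 0)
    (hstab : ∀ i : Fin L, stab L i *ᵥ ψ = ψ) :
    (rhoc L ψ * (pauliZ L ((2 * r : ℕ) - 1) * pauliZ L ((2 * r' + 1 : ℕ))) *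
        rhoc L ψ * (pauliZ L ((2 * r : ℕ) - 1) * pauliZ L ((2 * r' + 1 : ℕ)))).trace /
      (rhoc L ψ * rhoc L ψ).trace = 1 := by
  have ha : (((2 * r : ℕ) : Fin L) - 1).val % 2 = 1 := by
    have h : ((2 * r : ℕ) : Fin L) - 1 = ((2 * r - 1 : ℕ) : Fin L) := by
      conv_lhs => rw [show 2 * r = 2 * r - 1 + 1 by omega, Nat.cast_succ, add_sub_cancel_right]
    rw [h, Fin.val_cast_of_lt (by omega)]
    omega
  have hb : ((2 * r' + 1 : ℕ) : Fin L).val % 2 = 1 := by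
    rw [Fin.val_cast_of_lt hbound]
    omega
  set O := pauliZ L ((2 * r : ℕ) - 1) * pauliZ L ((2 * r' + 1 : ℕ))
  have hO : O.IsHermitian :=
    ((isHermitian_pauliZ _).commute_iff (isHermitian_pauliZ _)).1 (commute_pauliZ_pauliZ _ _)
  have hcomm : ∀ A ⊆ evens L, Commute O (flipSet L A) := fun A hA =>
    (commute_pauliZ_flipSet (notMem_of_subset_evens hA ha)).mul_left
      (commute_pauliZ_flipSet (notMem_of_subset_evens hA hb))
  have hinv : O * rhoc L ψ * O = rhoc L ψ :=
    mul_rhoc_mul_eq_self (evenBlock_subset_evens r r') hO hcomm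
      (flipSet_evenBlock_mulVec hstab hrr'.le hbound).symm
  rw [show rhoc L ψ * O * rhoc L ψ * O = rhoc L ψ * (O * rhoc L ψ * O) by simp only [mul_assoc],
    hinv, div_self (trace_rhoc_mul_rhoc_ne_zero hψ)]

/-- For the decohered cluster state `ρ_c` (`h = 0`), the Rényi-2 correlator
`Tr(ρ_c Z_{2r-1}Z_{2r'+1} ρ_c Z_{2r-1}Z_{2r'+1}) / Tr(ρ_c²) = 1` for all
`r < r'`. -/
theorem stmt9 (L r r' : ℕ) [NeZero L] (hL : Even L)
    (hr : 0 < r) (hrr' : r < r') (hbound : 2 * r' + 1 < L)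
    (ψ : (Fin L → Fin 2) → ℂ) (hψ : ψ ≠ 0)
    (hstab : ∀ i : Fin L, stab L i *ᵥ ψ = ψ) :
    (rhoc L ψ * (pauliZ L ((2 * r : ℕ) - 1) * pauliZ L ((2 * r' + 1 : ℕ))) *
        rhoc L ψ * (pauliZ L ((2 * r : ℕ) - 1) * pauliZ L ((2 * r' + 1 : ℕ)))).trace /
      (rhoc L ψ * rhoc L ψ).trace = 1 :=
  stmt9_general L r r' hr hrr' hbound ψ hψ hstab
end

section
/- In the fixed-point decorated-domain-wall mixed state, the Rényi-2 correlator equals exactly 1: with weight constraint δ(ω_{g_{i-1}g_{i+1}^{-1}} = ω_{h_{i-1}h_{i+1}^{-1}}) for all odd i, the sum Σ_{{g},{h}} [∏ δ] · ω_{g_r}(s) ω_{g_{r'}}(s)^{-1} ω_{h_r}(s)^{-1} ω_{h_{r'}}(s) equals Σ_{{g},{h}} ∏ δ. -/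
open scoped Classical

/-! The constraint at site `k` reads `ω(g k) / ω(g (k+1)) = ω(h k) / ω(h (k+1))` in the
commutative group `S →* Circle`, i.e. the ratio `ω(g k) / ω(h k)` does not change from one site
to the next, so it is constant around the cycle. The phase is this ratio at `r` divided by the
same ratio at `r'`, evaluated at `s`, hence it is `1`. -/

theorem Fin.apply_eq_apply_of_forall_apply_add_one_eq {α : Type*} {n : ℕ} [NeZero n]
    {f : Fin n → α} (hf : ∀ k, f (k + 1) = f k) (i j : Fin n) : f i = f j := by
  obtain ⟨m, rfl⟩ := Nat.exists_eq_succ_of_ne_zero (NeZero.ne n)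
  have h0 : ∀ k : Fin (m + 1), f k = f 0 := by
    refine Fin.induction rfl fun k ih => ?_
    rw [← Fin.coeSucc_eq_succ, hf, ih]
  rw [h0 i, h0 j]

theorem Fin.div_apply_eq_div_apply_of_forall_div_eq_div {M : Type*} [CommGroup M] {n : ℕ}
    [NeZero n] {a b : Fin n → M} (h : ∀ k, a k / a (k + 1) = b k / b (k + 1)) (i j : Fin n) :
    a i / b i = a j / b j :=
  Fin.apply_eq_apply_of_forall_apply_add_one_eq (f := fun k => a k / b k)
    (fun k => (div_eq_div_iff_div_eq_div.mp (h k)).symm) i j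

theorem Circle.coe_mul_inv_mul_inv_mul_eq_one {x y z w : Circle} (h : x / z = y / w) :
    (x : ℂ) * (y : ℂ)⁻¹ * (z : ℂ)⁻¹ * w = 1 := by
  have hC := congrArg ((↑) : Circle → ℂ) h
  simp only [Circle.coe_div] at hC
  have := Circle.coe_ne_zero
  field_simp at hC ⊢
  linear_combination hC

/-- In the fixed-point decorated-domain-wall mixed state, the Rényi-2 correlator
equals exactly `1`: summing over pairs of configurations `g, h` on the even
sites of a finite cycle, subject to the constraint that the decorated charges
`ω_{g_{i-1} g_{i+1}⁻¹}` and `ω_{h_{i-1} h_{i+1}⁻¹}` agree at every odd site,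
the phase-weighted sum
`Σ_{g,h} [∏ δ] ω_{g_r}(s) ω_{g_{r'}}(s)⁻¹ ω_{h_r}(s)⁻¹ ω_{h_{r'}}(s)`
equals the plain sum `Σ_{g,h} ∏ δ`. -/
theorem stmt12 (G : Type*) [Group G] [Fintype G] (S : Type*) [CommGroup S] [Fintype S]
    (n : ℕ) [NeZero n] (ω : G →* (S →* Circle)) (s : S) (r r' : Fin n) :
    (∑ g : Fin n → G, ∑ h : Fin n → G,
        if (∀ k : Fin n, ω (g k * (g (k + 1))⁻¹) = ω (h k * (h (k + 1))⁻¹)) then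
          ((ω (g r) s : ℂ) * ((ω (g r') s : ℂ))⁻¹ *
            ((ω (h r) s : ℂ))⁻¹ * (ω (h r') s : ℂ))
        else 0)
      = ∑ g : Fin n → G, ∑ h : Fin n → G,
          if (∀ k : Fin n, ω (g k * (g (k + 1))⁻¹) = ω (h k * (h (k + 1))⁻¹)) then
            (1 : ℂ)
          else 0 := by
  refine Finset.sum_congr rfl fun g _ => Finset.sum_congr rfl fun h _ =>
    ite_congr rfl (fun hc => ?_) fun _ => rfl
  simp only [← div_eq_mul_inv, map_div] at hc
  have hq := Fin.div_apply_eq_div_apply_of_forall_div_eq_div hc r r'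
  exact Circle.coe_mul_inv_mul_inv_mul_eq_one (by simpa using DFunLike.congr_fun hq s)
end
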